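/- arXiv:2511.14568 — 2 statements merged into one kernel-verified Lean document; each statement's English description precedes it below -/
import Mathlib

section
/- Let α > 0 (Poisson parameter). Set e := Exp∘(α·(Exp - 1)) - 1 ∈ ℝ⟦X⟧. Then for all natural numbers n ≥ k: c_n( e^k / k! ) = Σ_{j=k}^{n} α^j·S₂(j,k)·S₂(n,j). -/
open PowerSeries Finset

noncomputable section

/-- `cN n F = n! * (coefficient of X^n in F)`. -/
def cN (n : ℕ) (F : PowerSeries ℝ) : ℝ := (n.factorial : ℝ) * PowerSeries.coeff n F

/-- Formal substitution `F ∘ G` (faithful when `G` has zero constant coefficient). -/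
def pcomp (F G : PowerSeries ℝ) : PowerSeries ℝ :=
  PowerSeries.mk fun n =>
    ∑ k ∈ Finset.range (n + 1), (PowerSeries.coeff k F) * (PowerSeries.coeff n (G ^ k))

/-- The formal series of log(1+X). -/
def L : PowerSeries ℝ := PowerSeries.mk fun n => if n = 0 then 0 else (-1 : ℝ) ^ (n - 1) / n

/-- Falling factorial `(y)_m`. -/
def ff (y : ℝ) (m : ℕ) : ℝ := ∏ i ∈ Finset.range m, (y - i)

/-- Rising factorial `⟨y⟩_m`. -/
def rf (y : ℝ) (m : ℕ) : ℝ := ∏ i ∈ Finset.range m, (y + i)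

/-- Degenerate falling factorial `(x)_{n,λ}`. -/
def ffl (x : ℝ) (n : ℕ) (lam : ℝ) : ℝ := ∏ i ∈ Finset.range n, (x - i * lam)

/-- Stirling numbers of the second kind. -/
def S2 (n k : ℕ) : ℝ :=
  (k.factorial : ℝ)⁻¹ * ∑ j ∈ Finset.range (k + 1), (-1 : ℝ) ^ (k - j) * (k.choose j) * (j : ℝ) ^ n

/-- The falling factorial polynomial `x(x-1)⋯(x-n+1)`. -/
def fallingPoly (n : ℕ) : Polynomial ℝ := ∏ i ∈ Finset.range n, (Polynomial.X - Polynomial.C (i : ℝ))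

/-- (Signed) Stirling numbers of the first kind. -/
def S1 (n k : ℕ) : ℝ := (fallingPoly n).coeff k

/-- Degenerate Stirling numbers of the second kind. -/
def S2d (lam : ℝ) (n k : ℕ) : ℝ :=
  (k.factorial : ℝ)⁻¹ *
    ∑ j ∈ Finset.range (k + 1), (-1 : ℝ) ^ (k - j) * (k.choose j) * ffl (j : ℝ) n lam

/-- Formal degenerate exponential `e_λ`. -/
def degExp (lam : ℝ) : PowerSeries ℝ := PowerSeries.mk fun n => ffl 1 n lam / n.factorial

/-- Formal degenerate logarithm `Λ_λ` of `1+X`. -/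
def degLog (lam : ℝ) : PowerSeries ℝ :=
  lam⁻¹ • PowerSeries.mk fun n => if n = 0 then 0 else ff lam n / n.factorial

/-- Degenerate Stirling numbers of the first kind. -/
def S1d (lam : ℝ) (n k : ℕ) : ℝ := cN n ((k.factorial : ℝ)⁻¹ • (degLog lam) ^ k)

/-- Binomial series `(1+X)^c`. -/
def binser (c : ℝ) : PowerSeries ℝ := PowerSeries.mk fun n => ff c n / n.factorial

/-- Frobenius–Euler numbers of order `j`. -/
def FE (u : ℝ) (j n : ℕ) : ℝ :=
  cN n (((1 - u) • (PowerSeries.exp ℝ - PowerSeries.C u)⁻¹) ^ j)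

/-!
Substituting `g = α • (exp - 1)`, which has zero constant coefficient, is a ring homomorphism, so
`(exp ∘ g - 1)^k = (exp - 1)^k ∘ g`. Since `(exp - 1)^j / j!` is the exponential generating function
of `S2 · j`, reading off coefficients of `(exp - 1)^k ∘ g = ∑_j coeff_j((exp - 1)^k) • g^j` gives
`∑_j α^j S2 j k S2 n j`, and the terms with `j < k` vanish.
-/

namespace PowerSeries

variable {R : Type*} [CommRing R]

lemma coeff_pow_eq_zero_of_lt {g : R⟦X⟧} (hg : constantCoeff g = 0) {n m : ℕ} (h : n < m) :
    coeff n (g ^ m) = 0 :=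
  X_pow_dvd_iff.mp (pow_dvd_pow_of_dvd (X_dvd_iff.mpr hg) m) n h

lemma coeff_subst_eq_sum_range {g : R⟦X⟧} (hg : constantCoeff g = 0) (f : R⟦X⟧) (n : ℕ) :
    coeff n (f.subst g) = ∑ d ∈ range (n + 1), coeff d f * coeff n (g ^ d) := by
  rw [coeff_subst' (HasSubst.of_constantCoeff_zero' hg)]
  refine finsum_eq_sum_of_support_subset _ fun d hd => mem_range.mpr ?_
  by_contra! h
  exact hd (by simp only [coeff_pow_eq_zero_of_lt hg (show n < d by omega), smul_zero])

end PowerSeries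

lemma pcomp_eq_subst (F : PowerSeries ℝ) {G : PowerSeries ℝ} (hG : constantCoeff G = 0) :
    pcomp F G = F.subst G :=
  ext fun n => by rw [pcomp, coeff_mk, coeff_subst_eq_sum_range hG]

lemma coeff_exp_sub_one_pow (m j : ℕ) :
    coeff m ((exp ℝ - 1) ^ j) = j.factorial * S2 m j / m.factorial := by
  have hexp : (exp ℝ - 1) ^ j
      = ∑ i ∈ range (j + 1), C ((-1 : ℝ) ^ (j - i) * j.choose i) * rescale (i : ℝ) (exp ℝ) := by
    rw [sub_eq_add_neg, add_pow]
    refine sum_congr rfl fun i _ => ?_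
    simp only [map_mul, map_pow, map_neg, map_one, map_natCast, exp_pow_eq_rescale_exp]
    ring
  simp only [hexp, map_sum, coeff_C_mul, coeff_rescale, coeff_exp, one_div, map_inv₀, map_natCast,
    S2, mul_sum, sum_div]
  refine sum_congr rfl fun i _ => ?_
  field_simp

lemma S2_eq_zero_of_lt {m j : ℕ} (h : m < j) : S2 m j = 0 := by
  have hc := coeff_pow_eq_zero_of_lt (show constantCoeff (exp ℝ - 1) = 0 by simp) h
  rw [coeff_exp_sub_one_pow] at hc
  simpa [Nat.factorial_ne_zero] using hc

theorem stmt5_general (α : ℝ) (n k : ℕ) :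
    cN n ((k.factorial : ℝ)⁻¹ • (pcomp (PowerSeries.exp ℝ) (α • (PowerSeries.exp ℝ - 1)) - 1) ^ k)
      = ∑ j ∈ Finset.Icc k n, α ^ j * S2 j k * S2 n j := by
  set g : PowerSeries ℝ := α • (exp ℝ - 1)
  have hg : constantCoeff g = 0 := by simp [g]
  have hsubst : (pcomp (exp ℝ) g - 1) ^ k = ((exp ℝ - 1) ^ k).subst g := by
    have hs := HasSubst.of_constantCoeff_zero' hg
    rw [pcomp_eq_subst _ hg, ← coe_substAlgHom hs, map_pow, map_sub, map_one]
  have hterm : ∀ j ∈ range (n + 1), (n.factorial : ℝ) * ((k.factorial : ℝ)⁻¹ *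
      (coeff j ((exp ℝ - 1) ^ k) * coeff n (g ^ j))) = α ^ j * S2 j k * S2 n j := by
    intro j _
    simp only [g, smul_pow, coeff_smul, smul_eq_mul, coeff_exp_sub_one_pow]
    field_simp
  rw [cN, coeff_smul, hsubst, coeff_subst_eq_sum_range hg, smul_eq_mul, mul_sum, mul_sum,
    sum_congr rfl hterm]
  refine (sum_subset (fun j hj => ?_) fun j hj hjk => ?_).symm
  · simp only [mem_Icc, mem_range] at hj ⊢; omega
  · simp only [mem_Icc, mem_range, not_and, not_le] at hj hjk
    rw [S2_eq_zero_of_lt (by omega), mul_zero, zero_mul]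

theorem stmt5 (α : ℝ) (hα : 0 < α) (n k : ℕ) (hkn : k ≤ n) :
    cN n ((k.factorial : ℝ)⁻¹ • (pcomp (PowerSeries.exp ℝ) (α • (PowerSeries.exp ℝ - 1)) - 1) ^ k)
      = ∑ j ∈ Finset.Icc k n, α ^ j * S2 j k * S2 n j :=
  stmt5_general α n k
end
end

section
/- Let 0 < p < 1 (geometric parameter) and set u := 1/(1-p). Set e := p·Exp·(1 - (1-p)·Exp)^{-1} - 1 ∈ ℝ⟦X⟧ (the series 1 - (1-p)·Exp has invertible constant coefficient p). Then for all natural numbers n ≥ k: c_n( e^k / k! ) = (1/(k!·(p-1)^k))·Σ_{j=0}^{k} binom(k,j)·(-1)^j·H_n^{(j)}(u). -/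
open PowerSeries Finset

noncomputable section

/-! Since `(1 - p) u = 1`, `1 - (1 - p) Exp = (p - 1) (Exp - u)`, so the series `e` equals
`(p - 1)⁻¹ (1 - G)` with `G = (1 - u) (Exp - u)⁻¹` the generating series of the Frobenius–Euler
numbers; the binomial expansion of `(1 - G)^k` then gives the identity coefficientwise. -/

theorem smul_mul_inv_one_sub_smul_sub_one_eq {K : Type*} [Field K] {p u : K}
    (hpu : (1 - p) * u = 1) {E : K⟦X⟧} (hE : constantCoeff E ≠ u) :
    p • E * (1 - (1 - p) • E)⁻¹ - 1 = (p - 1)⁻¹ • (1 - (1 - u) • (E - C u)⁻¹) := by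
  set D := E - C u
  have hD : D * D⁻¹ = 1 := PowerSeries.mul_inv_cancel D (by simpa [D, sub_eq_zero])
  have hCu : (1 - p) • C u = (1 : K⟦X⟧) := by rw [smul_eq_C_mul, ← map_mul, hpu, map_one]
  have hdenom : 1 - (1 - p) • E = (p - 1) • D := by
    rw [smul_sub, show p - 1 = -(1 - p) by ring, neg_smul, neg_smul, hCu]; abel
  have hp : p - 1 ≠ 0 := fun h => by simp [show p = 1 by linear_combination h] at hpu
  have hc : C (p - 1)⁻¹ * (C p - 1) = (1 : K⟦X⟧) := by
    rw [← map_one C, ← map_sub, ← map_mul, inv_mul_cancel₀ hp]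
  have hpuC : C p * C u = C u - (1 : K⟦X⟧) := by
    rw [← map_one C, ← map_sub, ← map_mul]; congr 1; linear_combination -hpu
  rw [hdenom, PowerSeries.smul_inv, show E = D + C u by simp [D]]
  simp only [smul_eq_C_mul, map_sub, map_one]
  linear_combination (C (p - 1)⁻¹ * C p) * hD + hc + (C (p - 1)⁻¹ * D⁻¹) * hpuC

theorem one_sub_pow_eq_sum_smul {R A : Type*} [CommRing R] [CommRing A] [Algebra R A]
    (x : A) (n : ℕ) :
    (1 - x) ^ n = ∑ m ∈ range (n + 1), ((n.choose m : R) * (-1) ^ m) • x ^ m := by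
  rw [sub_eq_neg_add, add_pow]
  refine Finset.sum_congr rfl fun m _ => ?_
  rw [neg_pow, one_pow, mul_one, Algebra.smul_def, map_mul, map_pow, map_neg, map_one, map_natCast]
  ring

theorem cN_smul (n : ℕ) (a : ℝ) (F : ℝ⟦X⟧) : cN n (a • F) = a * cN n F := by
  simp only [cN, coeff_smul, smul_eq_mul]; ring

theorem cN_sum {ι : Type*} (n : ℕ) (s : Finset ι) (F : ι → ℝ⟦X⟧) :
    cN n (∑ i ∈ s, F i) = ∑ i ∈ s, cN n (F i) := by
  simp only [cN, map_sum, Finset.mul_sum]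

theorem stmt8_general (p : ℝ) (hp0 : 0 < p) (hp1 : p < 1) (u : ℝ) (hu : u = 1 / (1 - p))
    (n k : ℕ) :
    cN n ((k.factorial : ℝ)⁻¹ •
        (p • PowerSeries.exp ℝ * (1 - (1 - p) • PowerSeries.exp ℝ)⁻¹ - 1) ^ k)
      = 1 / ((k.factorial : ℝ) * (p - 1) ^ k) *
          ∑ j ∈ Finset.range (k + 1), (k.choose j : ℝ) * (-1) ^ j * FE u j n := by
  have hpu : (1 - p) * u = 1 := by
    rw [hu]; field_simp [show 1 - p ≠ 0 by linarith]
  have hu1 : constantCoeff (exp ℝ) ≠ u := by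
    rintro rfl
    rw [constantCoeff_exp, mul_one] at hpu
    linarith
  rw [smul_mul_inv_one_sub_smul_sub_one_eq hpu hu1, smul_pow, one_sub_pow_eq_sum_smul (R := ℝ),
    smul_smul, cN_smul, cN_sum, inv_pow, ← mul_inv, one_div]
  congr 1
  refine Finset.sum_congr rfl fun m _ => ?_
  rw [cN_smul, FE]

theorem stmt8 (p : ℝ) (hp0 : 0 < p) (hp1 : p < 1) (u : ℝ) (hu : u = 1 / (1 - p))
    (n k : ℕ) (hkn : k ≤ n) :
    cN n ((k.factorial : ℝ)⁻¹ •
        (p • PowerSeries.exp ℝ * (1 - (1 - p) • PowerSeries.exp ℝ)⁻¹ - 1) ^ k)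
      = 1 / ((k.factorial : ℝ) * (p - 1) ^ k) *
          ∑ j ∈ Finset.range (k + 1), (k.choose j : ℝ) * (-1) ^ j * FE u j n :=
  stmt8_general p hp0 hp1 u hu n k
end
end
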